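/- arXiv:math/0703662 — 5 statements merged into one kernel-verified Lean document; each statement's English description precedes it below -/
import Mathlib

section
/- Let (W, σ) be a symplectic vector space of dimension 2m and E: ℝ → W a smooth curve such that span{E(t), E'(t), …, E^{(m−1)}(t)} is a Lagrangian subspace of W for every t. If additionally E^{(2m)}(t) lies in span{E^{(i)}(t) : 0 ≤ i ≤ 2m−2} for all t, then σ(E^{(m)}(t), E^{(m−1)}(t)) is constant in t. -/
/-- For a curve whose first `m` derivatives span Lagrangian subspaces of a `2m`-dimensional
symplectic space, if `E^{(2m)}` lies in the span of `E, E', …, E^{(2m−2)}` at every time,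
then `σ(E^{(m)}, E^{(m−1)})` is constant. -/
theorem sigma_deriv_constant (W : Type*) [NormedAddCommGroup W] [NormedSpace ℝ W]
    [FiniteDimensional ℝ W] (m : ℕ) (hm : 1 ≤ m) (hdim : Module.finrank ℝ W = 2 * m)
    (σ : W →ₗ[ℝ] W →ₗ[ℝ] ℝ) (hskew : ∀ v w : W, σ v w = -σ w v)
    (hnondeg : ∀ v : W, (∀ w : W, σ v w = 0) → v = 0)
    (E : ℝ → W) (hE : ContDiff ℝ (⊤ : ℕ∞) E)
    (hindep : ∀ t : ℝ, LinearIndependent ℝ (fun i : Fin m => iteratedDeriv i.1 E t))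
    (hLag : ∀ t : ℝ, ∀ i < m, ∀ j < m, σ (iteratedDeriv i E t) (iteratedDeriv j E t) = 0)
    (hspan : ∀ t : ℝ, iteratedDeriv (2 * m) E t ∈
      Submodule.span ℝ (Set.range fun i : Fin (2 * m - 1) => iteratedDeriv i.1 E t)) :
    ∃ C : ℝ, ∀ t : ℝ, σ (iteratedDeriv m E t) (iteratedDeriv (m - 1) E t) = C := by
  classical
  -- smoothness of iterated derivatives
  have hsm : ∀ n : ℕ, ContDiff ℝ (⊤ : ℕ∞) (iteratedDeriv n E) := by
    intro n
    induction n with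
    | zero => simpa [iteratedDeriv_zero] using hE.of_le (by simp)
    | succ n ih =>
      rw [iteratedDeriv_succ]
      exact (contDiff_infty_iff_deriv.mp ih).2
  have hder : ∀ (n : ℕ) (t : ℝ),
      HasDerivAt (iteratedDeriv n E) (iteratedDeriv (n + 1) E t) t := by
    intro n t
    rw [iteratedDeriv_succ]
    exact (((hsm n).differentiable (by simp)) t).hasDerivAt
  -- continuous bilinear version of σ
  let L2 : W →ₗ[ℝ] (W →L[ℝ] ℝ) :=
    { toFun := fun v => LinearMap.toContinuousLinearMap (σ v)
      map_add' := by intro v w; ext u; simp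
      map_smul' := by intro c v; ext u; simp }
  let σc : W →L[ℝ] (W →L[ℝ] ℝ) := LinearMap.toContinuousLinearMap L2
  have hσc : ∀ v w : W, σc v w = σ v w := by
    intro v w
    simp [σc, L2]
  set g : ℕ → ℕ → ℝ → ℝ := fun i j t =>
    σ (iteratedDeriv i E t) (iteratedDeriv j E t) with hgdef
  have hgder : ∀ (i j : ℕ) (t : ℝ),
      HasDerivAt (g i j) (g (i + 1) j t + g i (j + 1) t) t := by
    intro i j t
    have h1 : HasDerivAt (fun s => σc (iteratedDeriv i E s))
        (σc (iteratedDeriv (i + 1) E t)) t :=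
      σc.hasFDerivAt.comp_hasDerivAt t (hder i t)
    have h2 := h1.clm_apply (hder j t)
    simpa [hgdef, hσc] using h2
  have hselfzero : ∀ v : W, σ v v = 0 := by
    intro v; have := hskew v v; linarith
  -- vanishing below the critical antidiagonal (with second index small)
  have hzero1 : ∀ i j : ℕ, i + j ≤ 2 * m - 2 → j ≤ m - 1 → ∀ t, g i j t = 0 := by
    intro i
    induction i with
    | zero =>
      intro j hij hj t
      exact hLag t 0 (by omega) j (by omega)
    | succ i ih =>
      intro j hij hj t
      by_cases hi : i + 1 < m
      · exact hLag t (i + 1) hi j (by omega)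
      · have hz : g i j = fun _ : ℝ => (0 : ℝ) := funext fun s => ih j (by omega) hj s
        have hu : g (i + 1) j t + g i (j + 1) t = 0 :=
          (hz ▸ (hgder i j t)).unique (hasDerivAt_const t (0 : ℝ))
        have h2 : g i (j + 1) t = 0 := ih (j + 1) (by omega) (by omega) t
        linarith
  have hzero : ∀ i j : ℕ, i + j ≤ 2 * m - 2 → ∀ t, g i j t = 0 := by
    intro i j hij t
    rcases le_or_gt j (m - 1) with h | h
    · exact hzero1 i j hij h t
    · have h1 := hzero1 j i (by omega) (by omega) t
      have h2 : g i j t = - g j i t := hskew _ _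
      rw [h2, h1]; ring
  -- σ(E^{(2m)}, E) = 0 using the span hypothesis
  have hd2m : ∀ t, g (2 * m) 0 t = 0 := by
    intro t
    have hle : Submodule.span ℝ
        (Set.range fun i : Fin (2 * m - 1) => iteratedDeriv i.1 E t) ≤
        LinearMap.ker (σ.flip (iteratedDeriv 0 E t)) := by
      rw [Submodule.span_le]
      rintro v ⟨i, rfl⟩
      simp only [SetLike.mem_coe, LinearMap.mem_ker, LinearMap.flip_apply]
      exact hzero i.1 0 (by have := i.2; omega) t
    have := hle (hspan t)
    simpa [hgdef] using this
  -- second-order recurrence on the antidiagonal i + j = 2m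
  have hrec : ∀ k : ℕ, k ≤ 2 * m - 2 → ∀ t,
      g (k + 2) (2 * m - 2 - k) t + 2 * g (k + 1) (2 * m - 1 - k) t
        + g k (2 * m - k) t = 0 := by
    intro k hk t
    have e1 : 2 * m - 2 - k + 1 = 2 * m - 1 - k := by omega
    have e2 : 2 * m - 1 - k + 1 = 2 * m - k := by omega
    -- the first derivative of g k (2m-2-k) ≡ 0
    have hz : g k (2 * m - 2 - k) = fun _ : ℝ => (0 : ℝ) :=
      funext fun s => hzero k (2 * m - 2 - k) (by omega) s
    have hF1 : ∀ s : ℝ, g (k + 1) (2 * m - 2 - k) s + g k (2 * m - 1 - k) s = 0 := by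
      intro s
      have := (hz ▸ (hgder k (2 * m - 2 - k) s)).unique (hasDerivAt_const s (0 : ℝ))
      rwa [e1] at this
    have hz2 : (fun s => g (k + 1) (2 * m - 2 - k) s + g k (2 * m - 1 - k) s)
        = fun _ : ℝ => (0 : ℝ) := funext hF1
    have hD2 : HasDerivAt (fun s => g (k + 1) (2 * m - 2 - k) s + g k (2 * m - 1 - k) s)
        ((g (k + 2) (2 * m - 2 - k) t + g (k + 1) (2 * m - 1 - k) t)
          + (g (k + 1) (2 * m - 1 - k) t + g k (2 * m - k) t)) t := by
      have ha := hgder (k + 1) (2 * m - 2 - k) t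
      have hb := hgder k (2 * m - 1 - k) t
      rw [e1] at ha
      rw [e2] at hb
      exact ha.add hb
    have := (hz2 ▸ hD2).unique (hasDerivAt_const t (0 : ℝ))
    linarith
  -- closed formula g k (2m-k) = (-1)^(k+1) k · g 1 (2m-1)
  have hform : ∀ (t : ℝ) (k : ℕ), k ≤ 2 * m →
      g k (2 * m - k) t = (-1 : ℝ) ^ (k + 1) * (k : ℝ) * g 1 (2 * m - 1) t := by
    intro t k
    induction k using Nat.strong_induction_on with
    | _ k ih =>
      match k with
      | 0 =>
        intro _
        have h1 : g 0 (2 * m - 0) t = - g (2 * m) 0 t := by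
          rw [show (2 * m - 0) = 2 * m from by omega]
          exact hskew _ _
        rw [h1, hd2m t]
        simp
      | 1 =>
        intro _
        simp
      | (k + 2) =>
        intro hk
        have h1 := ih (k + 1) (by omega) (by omega)
        have h0 := ih k (by omega) (by omega)
        have h2 := hrec k (by omega) t
        rw [show (2 * m - 2 - k) = 2 * m - (k + 2) from by omega,
          show (2 * m - 1 - k) = 2 * m - (k + 1) from by omega] at h2
        push_cast
        push_cast at h1 h0
        linear_combination h2 - 2 * h1 - h0
  -- g 1 (2m-1) ≡ 0
  have hX : ∀ t, g 1 (2 * m - 1) t = 0 := by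
    intro t
    have h := hform t m (by omega)
    rw [show 2 * m - m = m from by omega] at h
    have hmm : g m m t = 0 := hselfzero _
    rw [hmm] at h
    have h1 : ((-1 : ℝ) ^ (m + 1) * (m : ℝ)) ≠ 0 :=
      mul_ne_zero (pow_ne_zero _ (by norm_num)) (Nat.cast_ne_zero.2 (by omega))
    rcases mul_eq_zero.mp h.symm with h' | h'
    · exact absurd h' h1
    · exact h'
  -- hence g (m+1) (m-1) ≡ 0
  have hkey : ∀ t, g (m + 1) (m - 1) t = 0 := by
    intro t
    have h := hform t (m + 1) (by omega)
    rw [show 2 * m - (m + 1) = m - 1 from by omega, hX t] at h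
    simpa using h
  -- the function g m (m-1) has zero derivative everywhere
  have hconstder : ∀ s : ℝ, HasDerivAt (g m (m - 1)) 0 s := by
    intro s
    have h := hgder m (m - 1) s
    rw [show m - 1 + 1 = m from by omega] at h
    have hmm : g m m s = 0 := hselfzero _
    rw [hkey s, hmm] at h
    simpa using h
  have hconst : ∀ x y : ℝ, g m (m - 1) x = g m (m - 1) y := fun x y =>
    is_const_of_deriv_eq_zero (fun s => (hconstder s).differentiableAt)
      (fun s => (hconstder s).deriv) x y
  exact ⟨g m (m - 1) 0, fun t => hconst t 0⟩
end

section
/- For m ≥ 2, the bracket on the (2m+5)-dimensional vector space with basis h, g₀, g₁, g₂, ε₁, …, ε_{2m}, η defined by: [g₁,g₂]=2g₂, [g₁,h]=−2h, [g₂,h]=g₁, [g₀,h]=[g₀,g₁]=[g₀,g₂]=0, [h,ε_i]=ε_{i+1} for 1≤i≤2m−1, [h,ε_{2m}]=0, [ε_i,ε_{2m−i+1}]=(−1)^{i+1}η, [ε_i,ε_j]=0 for i+j≠2m+1, [g₁,ε_i]=(2m−2i+1)ε_i, [g₂,ε_i]=(i−1)(2m+1−i)ε_{i−1}, [g₀,ε_i]=−ε_i,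 [g₀,η]=−2η, [g₁,η]=[g₂,η]=[h,η]=[ε_i,η]=0, satisfies the Jacobi identity, and the resulting Lie algebra is a semidirect sum of 𝔤𝔩(2,ℝ) (spanned by h, g₀, g₁, g₂) acting on the Heisenberg algebra 𝔫_{2m+1} (spanned by ε₁,…,ε_{2m}, η). -/
/-!
Index the `ε`-coordinates by `Fin n` with `n = 2m`. On them `h`, `g₁`, `g₂` act by the raising,
weight and lowering operators of the `n`-dimensional irreducible `𝔰𝔩₂`-module and `g₀` by `-1`;
these operators satisfy the `𝔰𝔩₂` commutation relations, so `a ↦ glAct a` respects the `𝔤𝔩₂`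
bracket. The `η`-component of the bracket of two `ε`-vectors is the pairing
`∑ (-1)^i x_i y_{n-1-i}`, which is alternating for even `n` and for which raising, weight and
lowering are skew-adjoint, so `𝔤𝔩₂` acts on it through the character `a ↦ -2 a₁`, where `a₁`
is the `g₀`-coefficient. The Jacobi identity then splits into the Jacobi identity of `𝔤𝔩₂`,
the representation property on the `ε`-part and the invariance of the pairing on the `η`-part.
-/

/-- The bracket on the `(2m+5)`-dimensional space with basis `h, g₀, g₁, g₂, ε₁, …, ε_{2m}, η`.
Coordinates: `v.1 0, v.1 1, v.1 2, v.1 3` are the coefficients of `h, g₀, g₁, g₂`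
respectively, `v.2.1 i` is the coefficient of `ε_{i+1}`, and `v.2.2` that of `η`.
The structure constants are:
`[g₁,g₂]=2g₂, [g₁,h]=−2h, [g₂,h]=g₁, [g₀,·]=0` on `h,g₁,g₂`;
`[h,ε_i]=ε_{i+1}` (`[h,ε_{2m}]=0`), `[g₁,ε_i]=(2m−2i+1)ε_i`,
`[g₂,ε_i]=(i−1)(2m+1−i)ε_{i−1}`, `[g₀,ε_i]=−ε_i`;
`[ε_i,ε_{2m+1−i}]=(−1)^{i+1}η`, `[g₀,η]=−2η`, and `η` commutes with `h,g₁,g₂,ε_i`. -/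
def glHeisBr (m : ℕ) (v w : (Fin 4 → ℝ) × (Fin (2 * m) → ℝ) × ℝ) :
    (Fin 4 → ℝ) × (Fin (2 * m) → ℝ) × ℝ :=
  (![-2 * (v.1 2 * w.1 0 - v.1 0 * w.1 2), 0,
      v.1 3 * w.1 0 - v.1 0 * w.1 3,
      2 * (v.1 2 * w.1 3 - v.1 3 * w.1 2)],
   fun k =>
     (if 1 ≤ k.1 then
        v.1 0 * w.2.1 ⟨k.1 - 1, Nat.lt_of_le_of_lt (Nat.sub_le _ _) k.isLt⟩
          - w.1 0 * v.2.1 ⟨k.1 - 1, Nat.lt_of_le_of_lt (Nat.sub_le _ _) k.isLt⟩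
      else 0)
     + ((2 * m : ℝ) - 2 * k.1 - 1) * (v.1 2 * w.2.1 k - w.1 2 * v.2.1 k)
     + (if hk : k.1 + 1 < 2 * m then
          ((k.1 + 1 : ℝ) * ((2 * m : ℝ) - 1 - k.1)) *
            (v.1 3 * w.2.1 ⟨k.1 + 1, hk⟩ - w.1 3 * v.2.1 ⟨k.1 + 1, hk⟩)
        else 0)
     - (v.1 1 * w.2.1 k - w.1 1 * v.2.1 k),
   (∑ i : Fin (2 * m), (-1 : ℝ) ^ (i : ℕ) * v.2.1 i * w.2.1 i.rev)
     - 2 * (v.1 1 * w.2.2 - w.1 1 * v.2.2))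

namespace SlTwo

variable {R : Type*} [CommRing R] {n : ℕ}

variable (R n) in
def raise : Module.End R (Fin n → R) where
  toFun x k := if 1 ≤ k.1 then x ⟨k.1 - 1, by omega⟩ else 0
  map_add' x y := by funext k; dsimp only [Pi.add_apply]; split_ifs <;> ring
  map_smul' c x := by
    funext k; dsimp only [Pi.smul_apply, smul_eq_mul, RingHom.id_apply]; split_ifs <;> ring

variable (R n) in
def weight : Module.End R (Fin n → R) where
  toFun x k := ((n : R) - 2 * k.1 - 1) * x k
  map_add' x y := by funext k; dsimp only [Pi.add_apply]; ring
  map_smul' c x := by funext k; dsimp only [Pi.smul_apply, smul_eq_mul, RingHom.id_apply]; ring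

variable (R n) in
def lower : Module.End R (Fin n → R) where
  toFun x k :=
    if hk : k.1 + 1 < n then ((k.1 + 1 : R) * ((n : R) - 1 - k.1)) * x ⟨k.1 + 1, hk⟩ else 0
  map_add' x y := by funext k; dsimp only [Pi.add_apply]; split_ifs <;> ring
  map_smul' c x := by
    funext k; dsimp only [Pi.smul_apply, smul_eq_mul, RingHom.id_apply]; split_ifs <;> ring

lemma raise_apply (x : Fin n → R) (k : Fin n) :
    raise R n x k = if 1 ≤ k.1 then x ⟨k.1 - 1, by omega⟩ else 0 := rfl

lemma weight_apply (x : Fin n → R) (k : Fin n) :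
    weight R n x k = ((n : R) - 2 * k.1 - 1) * x k := rfl

lemma lower_apply (x : Fin n → R) (k : Fin n) :
    lower R n x k =
      if hk : k.1 + 1 < n then ((k.1 + 1 : R) * ((n : R) - 1 - k.1)) * x ⟨k.1 + 1, hk⟩ else 0 :=
  rfl

lemma lie_weight_raise : ⁅weight R n, raise R n⁆ = -2 • raise R n := by
  refine LinearMap.ext fun x => funext fun ⟨k, hk⟩ => ?_
  simp only [Ring.lie_def, LinearMap.sub_apply, Module.End.mul_apply,
    LinearMap.smul_apply, Pi.sub_apply, Pi.smul_apply, raise_apply, weight_apply]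
  split_ifs with h
  · obtain ⟨j, rfl⟩ : ∃ j, k = j + 1 := ⟨k - 1, by omega⟩
    simp only [add_tsub_cancel_right]
    push_cast
    ring
  · simp

lemma lie_weight_lower : ⁅weight R n, lower R n⁆ = 2 • lower R n := by
  refine LinearMap.ext fun x => funext fun ⟨k, hk⟩ => ?_
  simp only [Ring.lie_def, LinearMap.sub_apply, Module.End.mul_apply,
    LinearMap.smul_apply, Pi.sub_apply, Pi.smul_apply, lower_apply, weight_apply]
  split_ifs
  · push_cast
    ring
  · simp

lemma lie_lower_raise : ⁅lower R n, raise R n⁆ = weight R n := by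
  refine LinearMap.ext fun x => funext fun ⟨k, hk⟩ => ?_
  simp only [Ring.lie_def, LinearMap.sub_apply, Module.End.mul_apply,
    Pi.sub_apply, lower_apply, raise_apply, weight_apply]
  by_cases hlast : k + 1 < n
  · rcases k with _ | j
    · simp [hlast]
    · simp only [hlast, hk, dite_true, le_add_iff_nonneg_left, zero_le, if_true,
        add_tsub_cancel_right]
      push_cast
      ring
  · obtain rfl : n = k + 1 := by omega
    rcases k with _ | j
    · simp
    · simp only [lt_self_iff_false, dite_false, le_add_iff_nonneg_left, zero_le, if_true,
        add_tsub_cancel_right, lt_add_iff_pos_right, zero_lt_one, dite_true]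
      push_cast
      ring

variable (R n) in
def pairing : LinearMap.BilinForm R (Fin n → R) :=
  LinearMap.mk₂ R (fun x y => ∑ i : Fin n, (-1) ^ (i : ℕ) * x i * y i.rev)
    (fun x x' y => by simp only [Pi.add_apply, mul_add, add_mul, Finset.sum_add_distrib])
    (fun c x y => by
      simp only [Pi.smul_apply, smul_eq_mul, Finset.mul_sum]
      exact Finset.sum_congr rfl fun _ _ => by ring)
    (fun x y y' => by simp only [Pi.add_apply, mul_add, Finset.sum_add_distrib])
    (fun c x y => by
      simp only [Pi.smul_apply, smul_eq_mul, Finset.mul_sum]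
      exact Finset.sum_congr rfl fun _ _ => by ring)

lemma pairing_apply (x y : Fin n → R) :
    pairing R n x y = ∑ i : Fin n, (-1) ^ (i : ℕ) * x i * y i.rev := rfl

lemma natCast_val_rev (i : Fin n) : ((i.rev : ℕ) : R) = n - 1 - i := by
  rw [Fin.val_rev, Nat.cast_sub (by omega)]; push_cast; ring

lemma neg_one_pow_val_rev (hn : Even n) (i : Fin n) :
    (-1 : R) ^ (i.rev : ℕ) = -(-1) ^ (i : ℕ) := by
  have hodd : (-1 : R) ^ (i.rev : ℕ) * (-1) ^ (i : ℕ) = -1 := by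
    rw [← pow_add, Odd.neg_one_pow]
    rw [Fin.val_rev]; obtain ⟨m, rfl⟩ := hn; exact ⟨m - 1, by omega⟩
  have hsq : ((-1 : R) ^ (i : ℕ)) ^ 2 = 1 := by rw [← pow_mul, pow_mul', neg_one_sq, one_pow]
  linear_combination (-1 : R) ^ (i : ℕ) * hodd - (-1 : R) ^ (i.rev : ℕ) * hsq

lemma pairing_swap (hn : Even n) (x y : Fin n → R) : pairing R n y x = -pairing R n x y := by
  rw [pairing_apply, pairing_apply, ← Equiv.sum_comp Fin.revPerm, ← Finset.sum_neg_distrib]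
  refine Finset.sum_congr rfl fun i _ => ?_
  rw [Fin.revPerm_apply, Fin.rev_rev, neg_one_pow_val_rev hn]
  ring

section succ

variable {k : ℕ} (x : Fin (k + 1) → R)

@[simp] lemma raise_apply_zero : raise R (k + 1) x 0 = 0 := rfl

@[simp] lemma raise_apply_succ (i : Fin k) : raise R (k + 1) x i.succ = x i.castSucc := rfl

@[simp] lemma lower_apply_last : lower R (k + 1) x (Fin.last k) = 0 := by
  simp [lower_apply]

@[simp] lemma lower_apply_castSucc (i : Fin k) :
    lower R (k + 1) x i.castSucc = ((i : R) + 1) * ((k : R) - i) * x i.succ := by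
  rw [lower_apply, dif_pos (by simp)]
  show _ * (((k + 1 : ℕ) : R) - 1 - i) * x i.succ = _
  simp only [Fin.val_castSucc]; push_cast; ring

end succ

lemma isSkewAdjoint_raise : (pairing R n).IsSkewAdjoint (raise R n) := by
  intro x y
  rw [Pi.neg_apply, map_neg, eq_neg_iff_add_eq_zero]
  rcases n with _ | k
  · simp [pairing_apply]
  rw [pairing_apply, pairing_apply, Fin.sum_univ_succ, Fin.sum_univ_castSucc (n := k)]
  simp [Fin.rev_succ, Fin.rev_castSucc, pow_succ]

lemma isSkewAdjoint_weight : (pairing R n).IsSkewAdjoint (weight R n) := by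
  intro x y
  rw [Pi.neg_apply, map_neg, eq_neg_iff_add_eq_zero, pairing_apply, pairing_apply,
    ← Finset.sum_add_distrib]
  refine Finset.sum_eq_zero fun i _ => ?_
  rw [weight_apply, weight_apply, natCast_val_rev]
  ring

lemma isSkewAdjoint_lower : (pairing R n).IsSkewAdjoint (lower R n) := by
  intro x y
  rw [Pi.neg_apply, map_neg, eq_neg_iff_add_eq_zero]
  rcases n with _ | k
  · simp [pairing_apply]
  rw [pairing_apply, pairing_apply, Fin.sum_univ_castSucc, Fin.sum_univ_succ (n := k)]
  simp only [Fin.rev_succ, Fin.rev_castSucc, lower_apply_castSucc, lower_apply_last, Fin.rev_last,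
    Fin.rev_zero, mul_zero, zero_mul, add_zero, zero_add, Fin.val_succ, Fin.val_castSucc, pow_succ,
    ← Finset.sum_add_distrib]
  refine Finset.sum_eq_zero fun i _ => ?_
  rw [natCast_val_rev]
  ring

variable (R n) in
def glAct : (Fin 4 → R) →ₗ[R] Module.End R (Fin n → R) :=
  Fintype.linearCombination R ![raise R n, -1, weight R n, lower R n]

lemma glAct_apply (a : Fin 4 → R) :
    glAct R n a = a 0 • raise R n - a 1 • 1 + a 2 • weight R n + a 3 • lower R n := by
  simp [glAct, Fintype.linearCombination_apply, Fin.sum_univ_four, sub_eq_add_neg]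

lemma pairing_glAct_add (a : Fin 4 → R) (x y : Fin n → R) :
    pairing R n (glAct R n a x) y + pairing R n x (glAct R n a y) = -2 * a 1 * pairing R n x y := by
  have hr := isSkewAdjoint_raise x y
  have hw := isSkewAdjoint_weight x y
  have hl := isSkewAdjoint_lower x y
  simp only [Pi.neg_apply, map_neg] at hr hw hl
  simp only [glAct_apply, LinearMap.add_apply, LinearMap.sub_apply, LinearMap.smul_apply,
    Module.End.one_apply, map_add, map_sub, map_smul, smul_eq_mul]
  linear_combination a 0 * hr + a 2 * hw + a 3 * hl

end SlTwo

open SlTwo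

def gl2Br {R : Type*} [CommRing R] (a b : Fin 4 → R) : Fin 4 → R :=
  ![-2 * (a 2 * b 0 - a 0 * b 2), 0, a 3 * b 0 - a 0 * b 3, 2 * (a 2 * b 3 - a 3 * b 2)]

section gl2Br

variable {R : Type*} [CommRing R]

lemma gl2Br_apply_one (a b : Fin 4 → R) : gl2Br a b 1 = 0 := rfl

lemma gl2Br_zero_right (a : Fin 4 → R) : gl2Br a 0 = 0 := by
  funext i; fin_cases i <;> simp [gl2Br]

lemma gl2Br_add_right (a b c : Fin 4 → R) : gl2Br a (b + c) = gl2Br a b + gl2Br a c := by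
  funext i; fin_cases i <;> simp [gl2Br] <;> ring

lemma gl2Br_smul_right (t : R) (a b : Fin 4 → R) : gl2Br a (t • b) = t • gl2Br a b := by
  funext i; fin_cases i <;> simp [gl2Br] <;> ring

lemma gl2Br_swap (a b : Fin 4 → R) : gl2Br b a = -gl2Br a b := by
  funext i; fin_cases i <;> simp [gl2Br] <;> ring

lemma gl2Br_jacobi (a b c : Fin 4 → R) :
    gl2Br (gl2Br a b) c + gl2Br (gl2Br b c) a + gl2Br (gl2Br c a) b = 0 := by
  funext i; fin_cases i <;> simp [gl2Br] <;> ring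

lemma glAct_gl2Br {n : ℕ} (a b : Fin 4 → R) :
    glAct R n (gl2Br a b) = ⁅glAct R n a, glAct R n b⁆ := by
  have hwr := lie_weight_raise (R := R) (n := n)
  have hwl := lie_weight_lower (R := R) (n := n)
  have hlr := lie_lower_raise (R := R) (n := n)
  simp only [Ring.lie_def] at hwr hwl hlr ⊢
  simp only [glAct_apply, gl2Br, add_mul, mul_add, sub_mul, mul_sub, smul_mul_smul_comm, one_mul,
    mul_one, Matrix.cons_val]
  linear_combination (norm := module) (a 0 * b 2 - a 2 * b 0) • hwr
    + (a 3 * b 2 - a 2 * b 3) • hwl + (a 0 * b 3 - a 3 * b 0) • hlr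

end gl2Br

/-- `h ↦ E₂₁`, `g₀ ↦ 1`, `g₁ ↦ diag(1, -1)`, `g₂ ↦ E₁₂`. -/
def gl2Matrix (K : Type*) [Field K] [NeZero (2 : K)] :
    (Fin 4 → K) ≃ₗ[K] Matrix (Fin 2) (Fin 2) K where
  toFun a := !![a 2 + a 1, a 3; a 0, a 1 - a 2]
  invFun M := ![M 1 0, (M 0 0 + M 1 1) / 2, (M 0 0 - M 1 1) / 2, M 0 1]
  map_add' a b := by ext i j; fin_cases i <;> fin_cases j <;> simp <;> ring
  map_smul' c a := by ext i j; fin_cases i <;> fin_cases j <;> simp <;> ring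
  left_inv a := by funext i; fin_cases i <;> simp <;> field_simp <;> ring
  right_inv M := by ext i j; fin_cases i <;> fin_cases j <;> simp <;> field_simp <;> ring

lemma gl2Matrix_gl2Br {K : Type*} [Field K] [NeZero (2 : K)] (a b : Fin 4 → K) :
    gl2Matrix K (gl2Br a b) = ⁅gl2Matrix K a, gl2Matrix K b⁆ := by
  ext i j
  fin_cases i <;> fin_cases j <;> simp [gl2Matrix, gl2Br, Ring.lie_def] <;> ring

section glHeisBr

variable (m : ℕ)

lemma glHeisBr_eq (v w : (Fin 4 → ℝ) × (Fin (2 * m) → ℝ) × ℝ) :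
    glHeisBr m v w = (gl2Br v.1 w.1, glAct ℝ (2 * m) v.1 w.2.1 - glAct ℝ (2 * m) w.1 v.2.1,
      pairing ℝ (2 * m) v.2.1 w.2.1 - 2 * (v.1 1 * w.2.2 - w.1 1 * v.2.2)) := by
  refine Prod.ext rfl (Prod.ext ?_ rfl)
  funext k
  simp only [glHeisBr, glAct_apply, LinearMap.sub_apply, LinearMap.add_apply, LinearMap.smul_apply,
    Module.End.one_apply, Pi.sub_apply, Pi.add_apply, Pi.smul_apply, smul_eq_mul, raise_apply,
    weight_apply, lower_apply]
  push_cast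
  split_ifs <;> ring

lemma glHeisBr_isLinearMap (v : (Fin 4 → ℝ) × (Fin (2 * m) → ℝ) × ℝ) :
    IsLinearMap ℝ (glHeisBr m v) := by
  constructor
  · intro w w'
    simp only [glHeisBr_eq, Prod.fst_add, Prod.snd_add, gl2Br_add_right, map_add,
      LinearMap.add_apply, Prod.mk_add_mk, Pi.add_apply]
    refine Prod.ext rfl (Prod.ext ?_ ?_)
    · dsimp only; abel
    · dsimp only; ring
  · intro c w
    simp only [glHeisBr_eq, Prod.smul_fst, Prod.smul_snd, gl2Br_smul_right, map_smul,
      LinearMap.smul_apply, Prod.smul_mk, Pi.smul_apply, smul_eq_mul]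
    refine Prod.ext rfl (Prod.ext ?_ ?_)
    · dsimp only; rw [smul_sub]
    · dsimp only; ring

lemma glHeisBr_swap (v w : (Fin 4 → ℝ) × (Fin (2 * m) → ℝ) × ℝ) :
    glHeisBr m v w = -glHeisBr m w v := by
  rw [glHeisBr_eq, glHeisBr_eq, gl2Br_swap, pairing_swap (even_two_mul m), Prod.neg_mk,
    Prod.neg_mk]
  refine Prod.ext rfl (Prod.ext ?_ ?_)
  · dsimp only; abel
  · dsimp only; ring

lemma glHeisBr_jacobi (u v w : (Fin 4 → ℝ) × (Fin (2 * m) → ℝ) × ℝ) :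
    glHeisBr m (glHeisBr m u v) w + glHeisBr m (glHeisBr m v w) u
      + glHeisBr m (glHeisBr m w u) v = 0 := by
  simp only [glHeisBr_eq, Prod.mk_add_mk, Prod.mk_eq_zero]
  refine ⟨gl2Br_jacobi _ _ _, ?_, ?_⟩
  · simp only [glAct_gl2Br, Ring.lie_def, map_sub, LinearMap.sub_apply, Module.End.mul_apply]
    abel
  · simp only [gl2Br_apply_one, map_sub, LinearMap.sub_apply]
    have h1 := pairing_glAct_add u.1 v.2.1 w.2.1
    have h2 := pairing_glAct_add v.1 w.2.1 u.2.1
    have h3 := pairing_glAct_add w.1 u.2.1 v.2.1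
    have e1 := pairing_swap (even_two_mul m) v.2.1 (glAct ℝ (2 * m) u.1 w.2.1)
    have e2 := pairing_swap (even_two_mul m) w.2.1 (glAct ℝ (2 * m) v.1 u.2.1)
    have e3 := pairing_swap (even_two_mul m) u.2.1 (glAct ℝ (2 * m) w.1 v.2.1)
    linear_combination h1 + h2 + h3 - e1 - e2 - e3

lemma glHeisBr_of_fst_eq_zero {u v : (Fin 4 → ℝ) × (Fin (2 * m) → ℝ) × ℝ} (hu : u.1 = 0)
    (hv : v.1 = 0) : glHeisBr m u v = (0, 0, pairing ℝ (2 * m) u.2.1 v.2.1) := by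
  simp [glHeisBr_eq, hu, hv, gl2Br_zero_right]

end glHeisBr

theorem glHeisBr_semidirect_general (m : ℕ) :
    (∀ v, IsLinearMap ℝ (glHeisBr m v)) ∧
    (∀ v w, glHeisBr m v w = -glHeisBr m w v) ∧
    (∀ u v w,
      glHeisBr m (glHeisBr m u v) w + glHeisBr m (glHeisBr m v w) u
        + glHeisBr m (glHeisBr m w u) v = 0) ∧
    (∀ v w : (Fin 4 → ℝ) × (Fin (2 * m) → ℝ) × ℝ,
      v.2 = 0 → w.2 = 0 → (glHeisBr m v w).2 = 0) ∧
    (∃ φ : (Fin 4 → ℝ) → Matrix (Fin 2) (Fin 2) ℝ,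
      IsLinearMap ℝ φ ∧ Function.Bijective φ ∧
      ∀ a b : Fin 4 → ℝ,
        φ ((glHeisBr m (a, 0, 0) (b, 0, 0)).1) = φ a * φ b - φ b * φ a) ∧
    (∀ v w : (Fin 4 → ℝ) × (Fin (2 * m) → ℝ) × ℝ, w.1 = 0 → (glHeisBr m v w).1 = 0) ∧
    (∀ u v : (Fin 4 → ℝ) × (Fin (2 * m) → ℝ) × ℝ, u.1 = 0 → v.1 = 0 →
      glHeisBr m u v = (0, 0, ∑ i : Fin (2 * m), (-1 : ℝ) ^ (i : ℕ) * u.2.1 i * v.2.1 i.rev)) ∧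
    (∀ u v w : (Fin 4 → ℝ) × (Fin (2 * m) → ℝ) × ℝ, u.1 = 0 → v.1 = 0 → w.1 = 0 →
      glHeisBr m (glHeisBr m u v) w = 0) := by
  refine ⟨glHeisBr_isLinearMap m, glHeisBr_swap m, glHeisBr_jacobi m, fun v w hv hw => ?_,
    ⟨gl2Matrix ℝ, (gl2Matrix ℝ).toLinearMap.isLinear, (gl2Matrix ℝ).bijective,
      fun a b => gl2Matrix_gl2Br a b⟩,
    fun v w hw => ?_, fun u v hu hv => glHeisBr_of_fst_eq_zero m hu hv, fun u v w hu hv hw => ?_⟩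
  · simp [glHeisBr_eq, hv, hw]
  · rw [glHeisBr_eq, hw, gl2Br_zero_right]
  · rw [glHeisBr_of_fst_eq_zero m hu hv, glHeisBr_of_fst_eq_zero m rfl hw]
    simp

/-- The bracket `glHeisBr` is bilinear, skew-symmetric and satisfies the Jacobi identity;
the span of `h, g₀, g₁, g₂` is a subalgebra isomorphic to 𝔤𝔩(2,ℝ), the span of
`ε₁,…,ε_{2m}, η` is an ideal on which the bracket is the Heisenberg bracket (so that it is
isomorphic to the Heisenberg algebra 𝔫_{2m+1}, in particular two-step nilpotent), and the
whole algebra is the semidirect sum of the two. -/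
theorem glHeisBr_semidirect (m : ℕ) (hm : 2 ≤ m) :
    (∀ v, IsLinearMap ℝ (glHeisBr m v)) ∧
    (∀ v w, glHeisBr m v w = -glHeisBr m w v) ∧
    (∀ u v w,
      glHeisBr m (glHeisBr m u v) w + glHeisBr m (glHeisBr m v w) u
        + glHeisBr m (glHeisBr m w u) v = 0) ∧
    (∀ v w : (Fin 4 → ℝ) × (Fin (2 * m) → ℝ) × ℝ,
      v.2 = 0 → w.2 = 0 → (glHeisBr m v w).2 = 0) ∧
    (∃ φ : (Fin 4 → ℝ) → Matrix (Fin 2) (Fin 2) ℝ,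
      IsLinearMap ℝ φ ∧ Function.Bijective φ ∧
      ∀ a b : Fin 4 → ℝ,
        φ ((glHeisBr m (a, 0, 0) (b, 0, 0)).1) = φ a * φ b - φ b * φ a) ∧
    (∀ v w : (Fin 4 → ℝ) × (Fin (2 * m) → ℝ) × ℝ, w.1 = 0 → (glHeisBr m v w).1 = 0) ∧
    (∀ u v : (Fin 4 → ℝ) × (Fin (2 * m) → ℝ) × ℝ, u.1 = 0 → v.1 = 0 →
      glHeisBr m u v = (0, 0, ∑ i : Fin (2 * m), (-1 : ℝ) ^ (i : ℕ) * u.2.1 i * v.2.1 i.rev)) ∧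
    (∀ u v w : (Fin 4 → ℝ) × (Fin (2 * m) → ℝ) × ℝ, u.1 = 0 → v.1 = 0 → w.1 = 0 →
      glHeisBr m (glHeisBr m u v) w = 0) :=
  glHeisBr_semidirect_general m
end

section
/- With X₂ = ∂/∂x + Σ_{i=0}^{m−1} p_{i+1} ∂/∂p_i + (1/2)p_m² ∂/∂z and X₅ = −∂/∂p_{m−2} on ℝ^{m+2} (m ≥ 2), one has (ad X₂)^{i−5} X₅ = (−1)^i ∂/∂p_{m+3−i} for all 5 ≤ i ≤ m+3, where ad X₂ denotes the Lie bracket operator Y ↦ [X₂, Y]. In particular (ad X₂)^{m−2} X₅ = (−1)^{m+3} ∂/∂p₀. -/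
/-!
Away from its `½ p_m² ∂/∂z` term, `X₂` is affine, so bracketing it with a constant field `c`
gives the constant field `-DX₂ · c`. When `c` has no `∂/∂p_m` component this is minus the shift
`∂/∂p_{j+1} ↦ ∂/∂p_j`, so iterating `ad X₂` from `∂/∂p_{m-2}` walks down to `∂/∂p₀`, flipping the
sign at each step.
-/

/-- The Lie bracket of vector fields `X, Y` (viewed as maps `P → P`):
`[X,Y](q) = DY(q)(X(q)) − DX(q)(Y(q))`. -/
noncomputable def vecBr {P : Type*} [NormedAddCommGroup P] [NormedSpace ℝ P]
    (X Y : P → P) : P → P :=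
  fun q => fderiv ℝ Y q (X q) - fderiv ℝ X q (Y q)

theorem vecBr_const_right {P : Type*} [NormedAddCommGroup P] [NormedSpace ℝ P]
    (X : P → P) (c : P) : vecBr X (fun _ => c) = fun q => -fderiv ℝ X q c := by
  funext q
  simp [vecBr]

abbrev JetSpace (m : ℕ) := ℝ × (Fin (m + 1) → ℝ) × ℝ

noncomputable def shiftDown (m : ℕ) : (Fin (m + 1) → ℝ) →L[ℝ] (Fin (m + 1) → ℝ) :=
  ContinuousLinearMap.pi fun i =>
    if h : i.1 < m then ContinuousLinearMap.proj ⟨i.1 + 1, Nat.succ_lt_succ h⟩ else 0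

theorem shiftDown_apply {m : ℕ} (v : Fin (m + 1) → ℝ) (i : Fin (m + 1)) :
    shiftDown m v i = if h : i.1 < m then v ⟨i.1 + 1, Nat.succ_lt_succ h⟩ else 0 := by
  simp only [shiftDown, ContinuousLinearMap.pi_apply]
  split_ifs <;> rfl

theorem shiftDown_single {m j : ℕ} (hj : j < m) (a : ℝ) :
    shiftDown m (Pi.single ⟨j + 1, by omega⟩ a) = Pi.single ⟨j, by omega⟩ a := by
  funext i
  rw [shiftDown_apply]
  split_ifs with hi
  · simp [Pi.single_apply, Fin.ext_iff]
  · simp only [Pi.single_apply, Fin.ext_iff, right_eq_ite_iff]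
    omega

noncomputable def fieldX₂ (m : ℕ) : JetSpace m → JetSpace m := fun q =>
  (1, shiftDown m q.2.1, (1 / 2) * q.2.1 (Fin.last m) ^ 2)

theorem fderiv_fieldX₂_apply {m : ℕ} (q c : JetSpace m) :
    fderiv ℝ (fieldX₂ m) q c =
      (0, shiftDown m c.2.1, q.2.1 (Fin.last m) * c.2.1 (Fin.last m)) := by
  set p : JetSpace m →L[ℝ] (Fin (m + 1) → ℝ) :=
    (ContinuousLinearMap.fst ℝ _ ℝ).comp (ContinuousLinearMap.snd ℝ ℝ _)
  set pLast : JetSpace m →L[ℝ] ℝ := (ContinuousLinearMap.proj (Fin.last m)).comp p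
  have hz : HasFDerivAt (fun q : JetSpace m => (1 / 2 : ℝ) * q.2.1 (Fin.last m) ^ 2)
      (q.2.1 (Fin.last m) • pLast) q := by
    refine (((pLast.hasFDerivAt (x := q)).pow 2).const_mul (1 / 2 : ℝ)).congr_fderiv ?_
    refine ContinuousLinearMap.ext fun c => ?_
    simp only [smul_apply, ContinuousLinearMap.comp_apply,
      ContinuousLinearMap.coe_snd', ContinuousLinearMap.coe_fst', ContinuousLinearMap.proj_apply,
      smul_eq_mul, nsmul_eq_mul, pLast, p]
    ring
  have hp : HasFDerivAt (fun q : JetSpace m => shiftDown m q.2.1) (shiftDown m ∘L p) q :=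
    (shiftDown m ∘L p).hasFDerivAt
  unfold fieldX₂
  rw [((hasFDerivAt_const (1 : ℝ) q).prodMk (hp.prodMk hz)).fderiv]
  simp [pLast, p]

theorem vecBr_fieldX₂_single {m j : ℕ} (hj : j + 1 < m) (a : ℝ) :
    vecBr (fieldX₂ m) (fun _ => (0, Pi.single ⟨j + 1, by omega⟩ a, 0)) =
      fun _ => (0, Pi.single ⟨j, by omega⟩ (-a), 0) := by
  have hlast : (Pi.single ⟨j + 1, by omega⟩ a : Fin (m + 1) → ℝ) (Fin.last m) = 0 := by
    rw [Pi.single_apply, if_neg (by simp [Fin.ext_iff]; omega)]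
  rw [vecBr_const_right]
  funext q
  simp [fderiv_fieldX₂_apply, hlast, shiftDown_single (Nat.lt_of_succ_lt hj), Pi.single_neg]

theorem iterate_vecBr_fieldX₂_single {m : ℕ} (k : ℕ) {j n : ℕ} (hjk : j + k = n) (hn : n < m)
    (a : ℝ) :
    (vecBr (fieldX₂ m))^[k] (fun _ => (0, Pi.single ⟨n, by omega⟩ a, 0)) =
      fun _ => (0, Pi.single ⟨j, by omega⟩ ((-1) ^ k * a), 0) := by
  subst hjk
  induction k generalizing a with
  | zero => simp
  | succ k ih =>
    simp only [Function.iterate_succ_apply, ← Nat.add_assoc]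
    rw [vecBr_fieldX₂_single (j := j + k) hn, ih _ (by omega)]
    ring_nf

/-- On `ℝ^{m+2}` with coordinates `(x, p₀, …, p_m, z)`, for
`X₂ = ∂/∂x + Σ p_{i+1}∂/∂p_i + (1/2)p_m²∂/∂z` and `X₅ = −∂/∂p_{m−2}` (`m ≥ 2`),
one has `(ad X₂)^{i−5} X₅ = (−1)^i ∂/∂p_{m+3−i}` for `5 ≤ i ≤ m+3`; in particular
`(ad X₂)^{m−2} X₅ = (−1)^{m+3} ∂/∂p₀`. -/
theorem adX2_iterates (m : ℕ) (hm : 2 ≤ m)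
    (X₂ X₅ : (ℝ × (Fin (m + 1) → ℝ) × ℝ) → (ℝ × (Fin (m + 1) → ℝ) × ℝ))
    (hX₂ : X₂ = fun q => (1,
      fun i : Fin (m + 1) => if h : i.1 < m then q.2.1 ⟨i.1 + 1, by omega⟩ else 0,
      (1 / 2) * q.2.1 ⟨m, Nat.lt_succ_self m⟩ ^ 2))
    (hX₅ : X₅ = fun _ => (0, -Pi.single ⟨m - 2, by omega⟩ (1 : ℝ), 0)) :
    (∀ i : ℕ, ∀ _h5 : 5 ≤ i, ∀ _h3 : i ≤ m + 3,
      (fun Y => vecBr X₂ Y)^[i - 5] X₅ = fun _ =>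
        (0, Pi.single ⟨m + 3 - i, by omega⟩ ((-1 : ℝ) ^ i), 0)) ∧
    ((fun Y => vecBr X₂ Y)^[m - 2] X₅ = fun _ =>
      (0, Pi.single ⟨0, by omega⟩ ((-1 : ℝ) ^ (m + 3)), 0)) := by
  have hX₂ : X₂ = fieldX₂ m := by
    subst hX₂
    funext q
    simp only [fieldX₂, Prod.mk.injEq, true_and]
    refine ⟨?_, rfl⟩
    funext i
    rw [shiftDown_apply]
  simp only [← Pi.single_neg] at hX₅
  subst hX₂ hX₅
  have sign (k : ℕ) : (-1 : ℝ) ^ k * -1 = (-1) ^ (k + 5) := by ring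
  refine ⟨fun i h5 h3 => ?_, ?_⟩
  · rw [iterate_vecBr_fieldX₂_single (i - 5) (j := m + 3 - i) (by omega) (by omega), sign,
      Nat.sub_add_cancel h5]
  · rw [iterate_vecBr_fieldX₂_single (m - 2) (j := 0) (by omega) (by omega), sign,
      show m - 2 + 5 = m + 3 by omega]
end

section
/- Let 𝔤 be a Lie algebra of vector fields on a manifold, and let C, V₀ ⊇ V₁ ⊇ V₂ ⊇ … be families of submodules of vector fields with C of rank one, such that [V₀, V₀] ⊆ V₀ and, for each i ≥ 1, V_i = {v ∈ V_{i−1} : [C, v] ⊆ V_{i−1} + C} (where V_{i−1} + C denotes the sum of modules). Then [V_i, V_i] ⊆ V_i for every i ≥ 0. -/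
/-- Abstract version of Lemma 5.1(i): in a Lie algebra of vector fields, given a line
distribution `C` and a decreasing family of submodules `V₀ ⊇ V₁ ⊇ …` with `V₀` involutive
and `V_{i+1} = {v ∈ V i : [C, v] ⊆ V_i + C}`, each `V_i` is involutive. -/
theorem iterated_involutive (L : Type*) [LieRing L] [LieAlgebra ℝ L]
    (C : Submodule ℝ L) (V : ℕ → Submodule ℝ L)
    (hmono : ∀ i, V (i + 1) ≤ V i)
    (h0 : ∀ x ∈ V 0, ∀ y ∈ V 0, ⁅x, y⁆ ∈ V 0)
    (hchar : ∀ i, ∀ v : L, v ∈ V (i + 1) ↔ v ∈ V i ∧ ∀ c ∈ C, ⁅c, v⁆ ∈ V i ⊔ C) :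
    ∀ i, ∀ x ∈ V i, ∀ y ∈ V i, ⁅x, y⁆ ∈ V i := by
  intro i
  induction i with
  | zero => exact h0
  | succ i ih =>
    intro x hx y hy
    have hxi := hmono i hx
    have hyi := hmono i hy
    have hxC := ((hchar i x).mp hx).2
    have hyC := ((hchar i y).mp hy).2
    rw [hchar i]
    refine ⟨ih x hxi y hyi, fun c hc => ?_⟩
    have hJ : ⁅c, ⁅x, y⁆⁆ = ⁅⁅c, x⁆, y⁆ + ⁅x, ⁅c, y⁆⁆ := leibniz_lie c x y
    rw [hJ]
    refine Submodule.add_mem _ ?_ ?_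
    · obtain ⟨a, ha, b, hb, hab⟩ := Submodule.mem_sup.mp (hxC c hc)
      have : ⁅⁅c, x⁆, y⁆ = ⁅a, y⁆ + ⁅b, y⁆ := by rw [← hab, add_lie]
      rw [this]
      refine Submodule.add_mem _ ?_ ?_
      · exact Submodule.mem_sup_left (ih a ha y hyi)
      · have : ⁅b, y⁆ ∈ V i ⊔ C := hyC b hb
        exact this
    · obtain ⟨a, ha, b, hb, hab⟩ := Submodule.mem_sup.mp (hyC c hc)
      have : ⁅x, ⁅c, y⁆⁆ = ⁅x, a⁆ + ⁅x, b⁆ := by rw [← hab, lie_add]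
      rw [this]
      refine Submodule.add_mem _ ?_ ?_
      · exact Submodule.mem_sup_left (ih x hxi a ha)
      · rw [← lie_skew]
        exact Submodule.neg_mem _ (hxC b hb)
end

section
/- Let W be a 2m-dimensional real vector space and ℓ: ℝ → W a smooth curve such that {ℓ^{(j)}(t) : 0 ≤ j ≤ 2m−1} is a basis of W for each t. Define J_{(i)}(t) = span{ℓ^{(j)}(t) : 0 ≤ j ≤ m−1−i} for 0 ≤ i ≤ m−1 and J^{(i)}(t) = span{ℓ^{(j)}(t) : 0 ≤ j ≤ m−1+i} for 0 ≤ i ≤ m. Then for each i ≥ 1, J_{(i)}(t) = {v ∈ J_{(i−1)}(t) : there exists a smooth section s of J_{(i−1)} with s(t) = v and s'(t) ∈ J_{(i−1)}(t)}. -/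
open Finset

private lemma contDiff_top_deriv' {W : Type*} [NormedAddCommGroup W] [NormedSpace ℝ W]
    {f : ℝ → W} (hf : ContDiff ℝ (⊤ : ℕ∞) f) : ContDiff ℝ (⊤ : ℕ∞) (deriv f) := by
  have h : ContDiff ℝ (((⊤ : ℕ∞) : WithTop ℕ∞) + 1) f := by
    rwa [show (((⊤ : ℕ∞) : WithTop ℕ∞) + 1) = ((⊤ : ℕ∞) : WithTop ℕ∞) by
      exact_mod_cast top_add (1 : ℕ∞)]
  exact (contDiff_succ_iff_deriv.mp h).2.2

private lemma contDiff_top_iteratedDeriv' {W : Type*} [NormedAddCommGroup W] [NormedSpace ℝ W]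
    {f : ℝ → W} (hf : ContDiff ℝ (⊤ : ℕ∞) f) : ∀ k, ContDiff ℝ (⊤ : ℕ∞) (iteratedDeriv k f)
  | 0 => by simpa [iteratedDeriv_zero] using hf
  | k + 1 => by
    rw [iteratedDeriv_succ]
    exact contDiff_top_deriv' (contDiff_top_iteratedDeriv' hf k)

private lemma span_range_fin_congr' {W : Type*} [AddCommGroup W] [Module ℝ W]
    (f : ℕ → W) {a b : ℕ} (h : a = b) :
    Submodule.span ℝ (Set.range fun j : Fin a => f j.1) =
      Submodule.span ℝ (Set.range fun j : Fin b => f j.1) := by subst h; rfl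

private lemma sum_extend_zero' {W : Type*} [AddCommGroup W] [Module ℝ W]
    (f : ℕ → W) (g : ℕ → ℝ) {a b : ℕ} (hab : a ≤ b) (hg : ∀ k, a ≤ k → g k = 0) :
    ∑ k ∈ Finset.range b, g k • f k = ∑ k ∈ Finset.range a, g k • f k :=
  (Finset.sum_subset (Finset.range_subset_range.mpr hab) (fun k _ hk => by
    rw [hg k (by simpa using hk), zero_smul])).symm

/-- For a nondegenerate curve `ℓ` in a `2m`-dimensional space, with
`J_{(i)}(t) = span{ℓ^{(j)}(t) : 0 ≤ j ≤ m−1−i}`, the subspace `J_{(i)}(t)` consists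
exactly of those `v ∈ J_{(i−1)}(t)` admitting a smooth section `s` of `J_{(i−1)}` with
`s(t) = v` and `s'(t) ∈ J_{(i−1)}(t)`. -/
theorem J_subspaces_via_sections (W : Type*) [NormedAddCommGroup W] [NormedSpace ℝ W]
    [FiniteDimensional ℝ W] (m : ℕ) (hm : 1 ≤ m) (hdim : Module.finrank ℝ W = 2 * m)
    (ℓ : ℝ → W) (hℓ : ContDiff ℝ (⊤ : ℕ∞) ℓ)
    (hbasis : ∀ t : ℝ,
      LinearIndependent ℝ (fun j : Fin (2 * m) => iteratedDeriv j.1 ℓ t) ∧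
      Submodule.span ℝ (Set.range fun j : Fin (2 * m) => iteratedDeriv j.1 ℓ t) = ⊤)
    (J : ℕ → ℝ → Submodule ℝ W)
    (hJ : ∀ i ≤ m - 1, ∀ t : ℝ,
      J i t = Submodule.span ℝ (Set.range fun j : Fin (m - i) => iteratedDeriv j.1 ℓ t)) :
    ∀ i : ℕ, 1 ≤ i → i ≤ m - 1 → ∀ t : ℝ, ∀ v : W,
      v ∈ J i t ↔ (v ∈ J (i - 1) t ∧
        ∃ s : ℝ → W, ContDiff ℝ (⊤ : ℕ∞) s ∧ (∀ τ : ℝ, s τ ∈ J (i - 1) τ) ∧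
          s t = v ∧ deriv s t ∈ J (i - 1) t) := by
  intro i hi1 him t v
  have hii : i - 1 ≤ m - 1 := by omega
  have hmi1 : m - (i - 1) = (m - i) + 1 := by omega
  set P := m - i with hPdef
  have hP1 : P + 1 ≤ m := by omega
  have he : ∀ k, ContDiff ℝ (⊤ : ℕ∞) (iteratedDeriv k ℓ) := fun k => contDiff_top_iteratedDeriv' hℓ k
  have heD : ∀ (k : ℕ) (τ : ℝ), HasDerivAt (iteratedDeriv k ℓ) (iteratedDeriv (k + 1) ℓ τ) τ := by
    intro k τ
    have h1 : DifferentiableAt ℝ (iteratedDeriv k ℓ) τ :=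
      ((he k).differentiable (by simp)).differentiableAt
    simpa only [iteratedDeriv_succ] using h1.hasDerivAt
  have hJcur : J i t = Submodule.span ℝ (Set.range fun j : Fin P => iteratedDeriv j.1 ℓ t) :=
    hJ i him t
  have hJprev : ∀ τ : ℝ, J (i - 1) τ =
      Submodule.span ℝ (Set.range fun j : Fin (P + 1) => iteratedDeriv j.1 ℓ τ) := by
    intro τ
    rw [hJ (i - 1) hii τ]
    exact span_range_fin_congr' (fun k => iteratedDeriv k ℓ τ) hmi1
  constructor
  · intro hv
    rw [hJcur, Submodule.mem_span_range_iff_exists_fun] at hv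
    obtain ⟨cf, hcf⟩ := hv
    refine ⟨?_, fun τ => ∑ j : Fin P, cf j • iteratedDeriv j.1 ℓ τ, ?_, ?_, hcf, ?_⟩
    · rw [hJprev t, ← hcf]
      exact Submodule.sum_mem _ fun j _ => Submodule.smul_mem _ _
        (Submodule.subset_span ⟨⟨j.1, Nat.lt_succ_of_lt j.2⟩, rfl⟩)
    · exact ContDiff.sum fun j _ => (he j.1).const_smul (cf j)
    · intro τ
      rw [hJprev τ]
      exact Submodule.sum_mem _ fun j _ => Submodule.smul_mem _ _
        (Submodule.subset_span ⟨⟨j.1, Nat.lt_succ_of_lt j.2⟩, rfl⟩)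
    · have hD : HasDerivAt (fun τ => ∑ j : Fin P, cf j • iteratedDeriv j.1 ℓ τ)
          (∑ j : Fin P, cf j • iteratedDeriv (j.1 + 1) ℓ t) t :=
        HasDerivAt.fun_sum fun j _ => (heD j.1 t).const_smul (cf j)
      rw [hD.deriv, hJprev t]
      exact Submodule.sum_mem _ fun j _ => Submodule.smul_mem _ _
        (Submodule.subset_span ⟨⟨j.1 + 1, Nat.succ_lt_succ j.2⟩, rfl⟩)
  · rintro ⟨hv1, s, hs, hsect, hst, hds⟩
    -- a moving basis and smooth coordinates
    have hsp : ∀ τ : ℝ, ⊤ ≤ Submodule.span ℝ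
        (Set.range fun j : Fin (2 * m) => iteratedDeriv j.1 ℓ τ) := fun τ => (hbasis τ).2.ge
    set b : ℝ → Module.Basis (Fin (2 * m)) ℝ W := fun τ => Module.Basis.mk (hbasis τ).1 (hsp τ) with hb
    set A : ℝ → ((Fin (2 * m) → ℝ) ≃L[ℝ] W) :=
      fun τ => (b τ).equivFun.symm.toContinuousLinearEquiv with hA
    have hA_apply : ∀ (τ : ℝ) (cf : Fin (2 * m) → ℝ),
        A τ cf = ∑ k : Fin (2 * m), cf k • iteratedDeriv k.1 ℓ τ := by
      intro τ cf
      simp [hA, hb, Module.Basis.equivFun_symm_apply]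
    set E : ℝ → ((Fin (2 * m) → ℝ) →L[ℝ] W) :=
      fun τ => ∑ k : Fin (2 * m), (ContinuousLinearMap.proj k).smulRight (iteratedDeriv k.1 ℓ τ)
      with hE
    have hE_apply : ∀ (τ : ℝ) (cf : Fin (2 * m) → ℝ),
        E τ cf = ∑ k : Fin (2 * m), cf k • iteratedDeriv k.1 ℓ τ := by
      intro τ cf
      simp [hE]
    have hEA : ∀ τ : ℝ, (A τ : (Fin (2 * m) → ℝ) →L[ℝ] W) = E τ := by
      intro τ
      ext cf
      rw [hE_apply]
      exact hA_apply τ cf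
    have hEsmooth : ContDiff ℝ (⊤ : ℕ∞) E := by
      apply ContDiff.sum
      intro k _
      exact (ContinuousLinearMap.smulRightL ℝ (Fin (2 * m) → ℝ) W
        (ContinuousLinearMap.proj k)).contDiff.comp (he k.1)
    set c : ℝ → (Fin (2 * m) → ℝ) := fun τ => (A τ).symm (s τ) with hc
    have hc_inv : ∀ (τ : ℝ) (cf : Fin (2 * m) → ℝ),
        s τ = ∑ k : Fin (2 * m), cf k • iteratedDeriv k.1 ℓ τ → c τ = cf := by
      intro τ cf h
      have h2 : A τ cf = s τ := by rw [hA_apply]; exact h.symm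
      show (A τ).symm (s τ) = cf
      rw [← h2]
      exact (A τ).symm_apply_apply cf
    have hsrepr : ∀ τ : ℝ, s τ = ∑ k : Fin (2 * m), c τ k • iteratedDeriv k.1 ℓ τ := by
      intro τ
      rw [← hA_apply]
      exact ((A τ).apply_symm_apply (s τ)).symm
    have hcd : ContDiffAt ℝ (⊤ : ℕ∞) c t := by
      have h1 : ContDiffAt ℝ (⊤ : ℕ∞) (fun τ => ContinuousLinearMap.inverse (E τ)) t := by
        have h0 : ContDiffAt ℝ (⊤ : ℕ∞) ContinuousLinearMap.inverse (E t) := by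
          rw [← hEA t]; exact contDiffAt_map_inverse (A t)
        exact h0.comp t hEsmooth.contDiffAt
      have h2 : ContDiffAt ℝ (⊤ : ℕ∞) (fun τ => ContinuousLinearMap.inverse (E τ) (s τ)) t :=
        h1.clm_apply hs.contDiffAt
      have h3 : c = fun τ => ContinuousLinearMap.inverse (E τ) (s τ) := by
        funext τ
        rw [hc, ← hEA τ, ContinuousLinearMap.inverse_equiv]
        rfl
      rw [h3]
      exact h2
    have hcdiff : DifferentiableAt ℝ c t := hcd.differentiableAt (by simp)
    set c' : Fin (2 * m) → ℝ := deriv c t with hc'p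
    have hcD : HasDerivAt c c' t := hcdiff.hasDerivAt
    have hcDk : ∀ k, HasDerivAt (fun τ => c τ k) (c' k) t := fun k => hasDerivAt_pi.mp hcD k
    -- vanishing of the high coordinates
    have hzero : ∀ (τ : ℝ) (k : Fin (2 * m)), P < k.1 → c τ k = 0 := by
      intro τ k hk
      have hmem := hsect τ
      rw [hJprev τ, Submodule.mem_span_range_iff_exists_fun] at hmem
      obtain ⟨d, hd⟩ := hmem
      set dd : ℕ → ℝ := fun n => if h : n < P + 1 then d ⟨n, h⟩ else 0 with hdd
      have heq : s τ = ∑ k : Fin (2 * m), dd k.1 • iteratedDeriv k.1 ℓ τ := by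
        rw [← hd, Fin.sum_univ_eq_sum_range (fun n => dd n • iteratedDeriv n ℓ τ) (2 * m),
          sum_extend_zero' (fun n => iteratedDeriv n ℓ τ) dd (by omega : P + 1 ≤ 2 * m)
            (fun n hn => dif_neg (by omega)),
          ← Fin.sum_univ_eq_sum_range (fun n => dd n • iteratedDeriv n ℓ τ) (P + 1)]
        apply Finset.sum_congr rfl
        intro j _
        congr 1
        simp only [hdd]
        rw [dif_pos j.isLt]
      have hcv := hc_inv τ (fun k => dd k.1) heq
      rw [hcv]
      show dd k.1 = 0
      rw [hdd]
      exact dif_neg (by omega)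
    -- derivative formula
    have hsD : HasDerivAt s (∑ k : Fin (2 * m),
        (c t k • iteratedDeriv (k.1 + 1) ℓ t + c' k • iteratedDeriv k.1 ℓ t)) t := by
      have h2 : s = fun τ => ∑ k : Fin (2 * m), c τ k • iteratedDeriv k.1 ℓ τ := funext hsrepr
      rw [h2]
      exact HasDerivAt.fun_sum fun k _ => (hcDk k).smul (heD k.1 t)
    have hDeq : deriv s t = ∑ k : Fin (2 * m),
        (c t k • iteratedDeriv (k.1 + 1) ℓ t + c' k • iteratedDeriv k.1 ℓ t) := hsD.deriv
    have hmem2 := hds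
    rw [hJprev t, Submodule.mem_span_range_iff_exists_fun] at hmem2
    obtain ⟨d, hd⟩ := hmem2
    set cc : ℕ → ℝ := fun n => if h : n < 2 * m then c t ⟨n, h⟩ else 0 with hcc
    set cc' : ℕ → ℝ := fun n => if h : n < 2 * m then c' ⟨n, h⟩ else 0 with hcc'
    set dd : ℕ → ℝ := fun n => if h : n < P + 1 then d ⟨n, h⟩ else 0 with hdd
    set bf : ℕ → ℝ := fun n => cc' n + (if n = 0 then 0 else cc (n - 1)) - dd n with hbf
    have hlt2 : P + 1 < 2 * m := by omega
    have hS1 : ∑ n ∈ Finset.range (2 * m), cc' n • iteratedDeriv n ℓ t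
        = ∑ k : Fin (2 * m), c' k • iteratedDeriv k.1 ℓ t := by
      rw [← Fin.sum_univ_eq_sum_range (fun n => cc' n • iteratedDeriv n ℓ t) (2 * m)]
      apply Finset.sum_congr rfl
      intro k _
      congr 1
      simp only [hcc']
      rw [dif_pos k.isLt]
    have hS2 : ∑ n ∈ Finset.range (2 * m),
          (if n = 0 then (0 : ℝ) else cc (n - 1)) • iteratedDeriv n ℓ t
        = ∑ k : Fin (2 * m), c t k • iteratedDeriv (k.1 + 1) ℓ t := by
      have hg2m : cc (2 * m - 1) = 0 := by
        simp only [hcc]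
        rw [dif_pos (by omega : 2 * m - 1 < 2 * m)]
        exact hzero t ⟨2 * m - 1, by omega⟩ (show P < 2 * m - 1 by omega)
      have h1 := Finset.sum_range_succ'
        (fun n => (if n = 0 then (0 : ℝ) else cc (n - 1)) • iteratedDeriv n ℓ t) (2 * m)
      have h2 := Finset.sum_range_succ
        (fun n => (if n = 0 then (0 : ℝ) else cc (n - 1)) • iteratedDeriv n ℓ t) (2 * m)
      have hf0 : (if (0 : ℕ) = 0 then (0 : ℝ) else cc (0 - 1)) • iteratedDeriv 0 ℓ t = 0 := by
        simp
      have hf2m : (if 2 * m = 0 then (0 : ℝ) else cc (2 * m - 1)) • iteratedDeriv (2 * m) ℓ t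
          = 0 := by
        rw [if_neg (by omega), hg2m, zero_smul]
      rw [hf0, add_zero] at h1
      rw [hf2m, add_zero] at h2
      have h3 : ∑ k : Fin (2 * m), c t k • iteratedDeriv (k.1 + 1) ℓ t
          = ∑ n ∈ Finset.range (2 * m),
              (if n + 1 = 0 then (0 : ℝ) else cc (n + 1 - 1)) • iteratedDeriv (n + 1) ℓ t := by
        rw [← Fin.sum_univ_eq_sum_range
          (fun n => (if n + 1 = 0 then (0 : ℝ) else cc (n + 1 - 1)) • iteratedDeriv (n + 1) ℓ t)
          (2 * m)]
        apply Finset.sum_congr rfl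
        intro k _
        rw [if_neg (Nat.succ_ne_zero _)]
        congr 1
        rw [Nat.add_sub_cancel]
        simp only [hcc]
        rw [dif_pos k.isLt]
      rw [h3]
      exact h2.symm.trans h1
    have hS3 : ∑ n ∈ Finset.range (2 * m), dd n • iteratedDeriv n ℓ t = deriv s t := by
      rw [sum_extend_zero' (fun n => iteratedDeriv n ℓ t) dd (by omega : P + 1 ≤ 2 * m)
          (fun n hn => by rw [hdd]; exact dif_neg (by omega)),
        ← Fin.sum_univ_eq_sum_range (fun n => dd n • iteratedDeriv n ℓ t) (P + 1), ← hd]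
      apply Finset.sum_congr rfl
      intro j _
      congr 1
      simp only [hdd]
      rw [dif_pos j.isLt]
    have hmain : ∑ n ∈ Finset.range (2 * m), bf n • iteratedDeriv n ℓ t = 0 := by
      have hterm : ∀ n, bf n • iteratedDeriv n ℓ t
          = (cc' n • iteratedDeriv n ℓ t
              + (if n = 0 then (0 : ℝ) else cc (n - 1)) • iteratedDeriv n ℓ t)
            - dd n • iteratedDeriv n ℓ t := by
        intro n
        rw [hbf, sub_smul, add_smul]
      rw [Finset.sum_congr rfl (fun n _ => hterm n), Finset.sum_sub_distrib,
        Finset.sum_add_distrib, hS1, hS2, hS3, hDeq, sub_eq_zero, ← Finset.sum_add_distrib]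
      apply Finset.sum_congr rfl
      intro k _
      exact add_comm _ _
    have heq0 : ∑ k : Fin (2 * m), bf k.1 • iteratedDeriv k.1 ℓ t = 0 := by
      rw [Fin.sum_univ_eq_sum_range (fun n => bf n • iteratedDeriv n ℓ t) (2 * m)]
      exact hmain
    have hall := Fintype.linearIndependent_iff.mp (hbasis t).1 (fun k : Fin (2 * m) => bf k.1) heq0
    have hbP1 : bf (P + 1) = 0 := hall ⟨P + 1, hlt2⟩
    have hcc'P1 : cc' (P + 1) = 0 := by
      have hz : (fun τ => c τ ⟨P + 1, hlt2⟩) = fun _ => (0 : ℝ) :=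
        funext fun τ => hzero τ ⟨P + 1, hlt2⟩ (Nat.lt_succ_self P)
      have hDc := hcDk ⟨P + 1, hlt2⟩
      rw [hz] at hDc
      have hz2 : c' ⟨P + 1, hlt2⟩ = 0 := hDc.unique (hasDerivAt_const t 0)
      show (if h : P + 1 < 2 * m then c' ⟨P + 1, h⟩ else 0) = 0
      rw [dif_pos hlt2]
      exact hz2
    have hddP1 : dd (P + 1) = 0 := by
      show (if h : P + 1 < P + 1 then d ⟨P + 1, h⟩ else 0) = 0
      exact dif_neg (by omega)
    have hccP : cc P = 0 := by
      have h : cc' (P + 1) + (if P + 1 = 0 then (0 : ℝ) else cc (P + 1 - 1)) - dd (P + 1) = 0 :=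
        hbP1
      rw [hcc'P1, hddP1, if_neg (by omega), zero_add, sub_zero] at h
      exact h
    have hccPall : ∀ n, P ≤ n → cc n = 0 := by
      intro n hn
      rcases eq_or_lt_of_le hn with h | h
      · rw [← h]; exact hccP
      · simp only [hcc]
        split
        · next hlt => exact hzero t ⟨n, hlt⟩ h
        · rfl
    rw [hJcur]
    have hveq : v = ∑ n ∈ Finset.range P, cc n • iteratedDeriv n ℓ t := by
      rw [← hst, hsrepr t,
        ← sum_extend_zero' (fun n => iteratedDeriv n ℓ t) cc (by omega : P ≤ 2 * m) hccPall,
        ← Fin.sum_univ_eq_sum_range (fun n => cc n • iteratedDeriv n ℓ t) (2 * m)]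
      apply Finset.sum_congr rfl
      intro k _
      congr 1
      simp only [hcc]
      rw [dif_pos k.isLt]
    rw [hveq]
    exact Submodule.sum_mem _ fun n hn => Submodule.smul_mem _ _
      (Submodule.subset_span ⟨⟨n, Finset.mem_range.mp hn⟩, rfl⟩)
end
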